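/- There is no completely uncoupled queer Kac-Moody algebra whose Dynkin diagram is a star with one central vertex α_1 connected to three other vertices α_2, α_3, α_4 (type D_4 shape), all simple roots of type Tak(sl(2)). -/
import Mathlib


/-- A complex Lie superalgebra, presented as a module with a ℤ/2-grading
(`even`/`odd` complementary submodules) and a bilinear bracket satisfying
super skew-symmetry and the super Jacobi identity (stated case by case on
homogeneous elements). -/
structure SuperLie (L : Type*) [AddCommGroup L] [Module ℂ L] where
  even : Submodule ℂ L
  odd : Submodule ℂ L
  bracket : L →ₗ[ℂ] L →ₗ[ℂ] L
  compl : IsCompl even odd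
  ee_mem : ∀ x ∈ even, ∀ y ∈ even, bracket x y ∈ even
  eo_mem : ∀ x ∈ even, ∀ y ∈ odd, bracket x y ∈ odd
  oe_mem : ∀ x ∈ odd, ∀ y ∈ even, bracket x y ∈ odd
  oo_mem : ∀ x ∈ odd, ∀ y ∈ odd, bracket x y ∈ even
  skew_e : ∀ x ∈ even, ∀ y : L, bracket x y = - bracket y x
  symm_oo : ∀ x ∈ odd, ∀ y ∈ odd, bracket x y = bracket y x
  jacobi_e : ∀ x ∈ even, ∀ y z : L,
    bracket x (bracket y z) = bracket (bracket x y) z + bracket y (bracket x z)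
  jacobi_oe : ∀ x ∈ odd, ∀ y ∈ even, ∀ z : L,
    bracket x (bracket y z) = bracket (bracket x y) z + bracket y (bracket x z)
  jacobi_oo : ∀ x ∈ odd, ∀ y ∈ odd, ∀ z : L,
    bracket x (bracket y z) = bracket (bracket x y) z - bracket y (bracket x z)

/-- The standard generators-and-coroots frame of a **queer Kac–Moody algebra**
(Section "Cartan datum for qKM algebras" of the paper).  For each simple root `α_i`
we have Chevalley generators `e i, E i ∈ 𝔤_{α_i}` and `f i, F i ∈ 𝔤_{-α_i}` (with
`e i, f i` of parity `pe i` and `E i, F i` of the opposite parity), the odd coroots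
`H i = [E i, f i] = [e i, F i]`, the pure even coroots `h i = [e i, f i]` and
`c i = [E i, F i]`, and the structure scalars `x i j`, `y i j` defined by
`[H i, e j] = x i j • E j` and `[H i, E j] = y i j • e j`. -/
structure QKMFrame (L : Type*) [AddCommGroup L] [Module ℂ L] where
  sl : SuperLie L
  hE : Submodule ℂ L
  hO : Submodule ℂ L
  hE_le : hE ≤ sl.even
  hO_le : hO ≤ sl.odd
  quasitoral : ∀ t ∈ hE, ∀ z ∈ hE ⊔ hO, sl.bracket t z = 0
  brOO : ∀ a ∈ hO, ∀ b ∈ hO, sl.bracket a b ∈ hE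
  n : ℕ
  alpha : Fin n → (L →ₗ[ℂ] ℂ)
  e : Fin n → L
  E : Fin n → L
  f : Fin n → L
  F : Fin n → L
  pe : Fin n → Bool
  x : Fin n → Fin n → ℂ
  y : Fin n → Fin n → ℂ
  e_ne : ∀ i, e i ≠ 0
  E_ne : ∀ i, E i ≠ 0
  e_par : ∀ i, if pe i then e i ∈ sl.odd else e i ∈ sl.even
  f_par : ∀ i, if pe i then f i ∈ sl.odd else f i ∈ sl.even
  E_par : ∀ i, if pe i then E i ∈ sl.even else E i ∈ sl.odd
  F_par : ∀ i, if pe i then F i ∈ sl.even else F i ∈ sl.odd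
  h_mem : ∀ i, sl.bracket (e i) (f i) ∈ hE
  c_mem : ∀ i, sl.bracket (E i) (F i) ∈ hE
  H_mem : ∀ i, sl.bracket (E i) (f i) ∈ hO
  H_eq : ∀ i, sl.bracket (E i) (f i) = sl.bracket (e i) (F i)
  wt_e : ∀ i, ∀ t ∈ hE, sl.bracket t (e i) = alpha i t • e i
  wt_E : ∀ i, ∀ t ∈ hE, sl.bracket t (E i) = alpha i t • E i
  wt_f : ∀ i, ∀ t ∈ hE, sl.bracket t (f i) = -(alpha i t) • f i
  wt_F : ∀ i, ∀ t ∈ hE, sl.bracket t (F i) = -(alpha i t) • F i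
  x_def : ∀ i j, sl.bracket (sl.bracket (E i) (f i)) (e j) = x i j • E j
  y_def : ∀ i j, sl.bracket (sl.bracket (E i) (f i)) (E j) = y i j • e j
  x_def' : ∀ i j, sl.bracket (sl.bracket (E i) (f i)) (f j) =
    (-((if pe i then (-1 : ℂ) else 1) * x i j)) • F j
  y_def' : ∀ i j, sl.bracket (sl.bracket (E i) (f i)) (F j) =
    ((if pe i then (-1 : ℂ) else 1) * y i j) • f j

namespace QKMFrame

variable {L : Type*} [AddCommGroup L] [Module ℂ L] (D : QKMFrame L)

/-- The odd coroot `H_i = [E_i, f_i]`. -/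
def H (i : Fin D.n) : L := D.sl.bracket (D.E i) (D.f i)

/-- The pure even coroot `h_i = [e_i, f_i]`. -/
def hcor (i : Fin D.n) : L := D.sl.bracket (D.e i) (D.f i)

/-- The pure even coroot `c_i = [E_i, F_i]`. -/
def c (i : Fin D.n) : L := D.sl.bracket (D.E i) (D.F i)

end QKMFrame

section Aux

variable {L : Type*} [AddCommGroup L] [Module ℂ L] (D : QKMFrame L)

/-- `α_j(c_i) = x_{ij} y_{ij}` for a root with `[H_i, H_i] = 2 c_i`. -/
lemma alpha_c_aux (i j : Fin D.n)
    (hsq : D.sl.bracket (D.H i) (D.H i) = (2 : ℂ) • D.c i) :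
    D.alpha j (D.c i) = D.x i j * D.y i j := by
  have hH : D.H i ∈ D.sl.odd := D.hO_le (D.H_mem i)
  have jo := D.sl.jacobi_oo (D.H i) hH (D.H i) hH (D.e j)
  have hx : D.sl.bracket (D.H i) (D.e j) = D.x i j • D.E j := D.x_def i j
  rw [hx, hsq] at jo
  have h1 : D.sl.bracket (D.H i) (D.x i j • D.E j)
      = (D.x i j * D.y i j) • D.e j := by
    rw [map_smul, QKMFrame.H, D.y_def i j, smul_smul]
  have h2 : D.sl.bracket ((2 : ℂ) • D.c i) (D.e j)
      = (2 * D.alpha j (D.c i)) • D.e j := by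
    rw [map_smul, LinearMap.smul_apply, D.wt_e j (D.c i) (D.c_mem i), smul_smul]
  rw [h1, h2] at jo
  have h3 : (2 * (D.x i j * D.y i j)) • D.e j = (2 * D.alpha j (D.c i)) • D.e j := by
    rw [two_mul, add_smul]
    rw [eq_sub_iff_add_eq] at jo
    exact jo
  have h4 := smul_left_injective ℂ (D.e_ne j) h3
  have h5 := mul_left_cancel₀ (two_ne_zero (α := ℂ)) h4
  exact h5.symm

/-- Expansion of `[H_i, H_j]` in the span of `h_j` and `c_j`. -/
lemma bracket_H_H_aux (i j : Fin D.n) :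
    ∃ a : ℂ, D.sl.bracket (D.H i) (D.H j) = D.y i j • D.hcor j + a • D.c j := by
  have hH : D.H i ∈ D.sl.odd := D.hO_le (D.H_mem i)
  have hy : D.sl.bracket (D.H i) (D.E j) = D.y i j • D.e j := D.y_def i j
  have hx' : D.sl.bracket (D.H i) (D.f j)
      = (-((if D.pe i then (-1 : ℂ) else 1) * D.x i j)) • D.F j := D.x_def' i j
  have hEp := D.E_par j
  cases hpe : D.pe j with
  | false =>
    rw [hpe] at hEp; simp only [if_neg Bool.false_ne_true] at hEp
    refine ⟨(if D.pe i then (-1 : ℂ) else 1) * D.x i j, ?_⟩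
    have jo := D.sl.jacobi_oo (D.H i) hH (D.E j) hEp (D.f j)
    rw [hy, hx'] at jo
    show D.sl.bracket (D.H i) (D.sl.bracket (D.E j) (D.f j)) = _
    rw [jo, map_smul, LinearMap.smul_apply, map_smul, neg_smul, sub_neg_eq_add]
    rfl
  | true =>
    rw [hpe] at hEp; simp only [if_pos rfl] at hEp
    refine ⟨-((if D.pe i then (-1 : ℂ) else 1) * D.x i j), ?_⟩
    have jo := D.sl.jacobi_oe (D.H i) hH (D.E j) hEp (D.f j)
    rw [hy, hx'] at jo
    show D.sl.bracket (D.H i) (D.sl.bracket (D.E j) (D.f j)) = _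
    rw [jo, map_smul, LinearMap.smul_apply, map_smul]
    rfl

end Aux

/-- There is no completely uncoupled queer Kac–Moody algebra whose
Dynkin diagram is a star (type `D₄` shape): a central simple root `α₀` connected to three
pairwise non-connected simple roots `α₁, α₂, α₃`, all of type `Tak(𝔰𝔩(2))`. -/
theorem qKM_no_uncoupled_D4_star
    {L : Type} [AddCommGroup L] [Module ℂ L] (D : QKMFrame L)
    (hn : D.n = 4) (i0 i1 i2 i3 : Fin D.n)
    (hdist : i0 ≠ i1 ∧ i0 ≠ i2 ∧ i0 ≠ i3 ∧ i1 ≠ i2 ∧ i1 ≠ i3 ∧ i2 ≠ i3)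
    -- all simple roots are of type `Tak(𝔰𝔩(2))`:
    (hdiag : ∀ i, D.alpha i (D.hcor i) = 2)
    (hcent : ∀ i, D.alpha i (D.c i) = 0)
    (hsq : ∀ i, D.sl.bracket (D.H i) (D.H i) = (2 : ℂ) • D.c i)
    -- the central root `α₀` is connected to each leaf, and uncoupled with it:
    (hconn : ∀ k, k = i1 ∨ k = i2 ∨ k = i3 →
      D.alpha i0 (D.hcor k) ≠ 0 ∧ D.alpha k (D.hcor i0) ≠ 0 ∧
      D.y i0 k * D.y k i0 ≠ 0)
    -- the leaves are pairwise non-connected: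
    (hleaf : ∀ k l, (k = i1 ∨ k = i2 ∨ k = i3) → (l = i1 ∨ l = i2 ∨ l = i3) → k ≠ l →
      D.alpha k (D.hcor l) = 0 ∧ D.x k l = 0 ∧ D.y k l = 0) :
    False := by
  obtain ⟨-, -, -, h12, h13, h23⟩ := hdist
  -- For each leaf `k`, expand `[H_{i0}, H_k]` both in the `(h_k, c_k)` frame and,
  -- via super-symmetry, in the `(h_{i0}, c_{i0})` frame, then apply any `α_l`.
  have expand : ∀ k : Fin D.n, ∃ a b : ℂ, ∀ l : Fin D.n,
      D.y i0 k * D.alpha l (D.hcor k) + a * D.alpha l (D.c k)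
        = D.y k i0 * D.alpha l (D.hcor i0) + b * D.alpha l (D.c i0) := by
    intro k
    obtain ⟨a, ha⟩ := bracket_H_H_aux D i0 k
    obtain ⟨b, hb⟩ := bracket_H_H_aux D k i0
    refine ⟨a, b, fun l => ?_⟩
    have hsymm : D.sl.bracket (D.H i0) (D.H k) = D.sl.bracket (D.H k) (D.H i0) :=
      D.sl.symm_oo _ (D.hO_le (D.H_mem i0)) _ (D.hO_le (D.H_mem k))
    have hh := congrArg (D.alpha l) ((ha.symm.trans hsymm).trans hb)
    simpa [map_add, map_smul, smul_eq_mul] using hh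
  -- For distinct leaves `k ≠ l`, both `α_l(h_k)` and `α_l(c_k)` vanish.
  have zer : ∀ k l, (k = i1 ∨ k = i2 ∨ k = i3) → (l = i1 ∨ l = i2 ∨ l = i3) → k ≠ l →
      D.alpha l (D.hcor k) = 0 ∧ D.alpha l (D.c k) = 0 := by
    intro k l hk hl hne
    refine ⟨(hleaf l k hl hk hne.symm).1, ?_⟩
    rw [alpha_c_aux D k l (hsq k), (hleaf k l hk hl hne).2.1, zero_mul]
  obtain ⟨a1, b1, hx1⟩ := expand i1
  obtain ⟨a2, b2, hx2⟩ := expand i2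
  set P2 := D.alpha i2 (D.hcor i0) with hP2def
  set P3 := D.alpha i3 (D.hcor i0) with hP3def
  set Q2 := D.alpha i2 (D.c i0) with hQ2def
  set Q3 := D.alpha i3 (D.c i0) with hQ3def
  have m1 : i1 = i1 ∨ i1 = i2 ∨ i1 = i3 := Or.inl rfl
  have m2 : i2 = i1 ∨ i2 = i2 ∨ i2 = i3 := Or.inr (Or.inl rfl)
  have m3 : i3 = i1 ∨ i3 = i2 ∨ i3 = i3 := Or.inr (Or.inr rfl)
  -- the four scalar equations
  have E13 : D.y i1 i0 * P3 + b1 * Q3 = 0 := by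
    obtain ⟨hz1, hz2⟩ := zer i1 i3 m1 m3 h13
    linear_combination -hx1 i3 + D.y i0 i1 * hz1 + a1 * hz2
  have E23 : D.y i2 i0 * P3 + b2 * Q3 = 0 := by
    obtain ⟨hz1, hz2⟩ := zer i2 i3 m2 m3 h23
    linear_combination -hx2 i3 + D.y i0 i2 * hz1 + a2 * hz2
  have E12 : D.y i1 i0 * P2 + b1 * Q2 = 0 := by
    obtain ⟨hz1, hz2⟩ := zer i1 i2 m1 m2 h12
    linear_combination -hx1 i2 + D.y i0 i1 * hz1 + a1 * hz2
  have E22 : D.y i2 i0 * P2 + b2 * Q2 = 2 * D.y i0 i2 := by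
    linear_combination -hx2 i2 + D.y i0 i2 * hdiag i2 + a2 * hcent i2
  -- nonvanishing data
  have hP3 : P3 ≠ 0 := (hconn i3 m3).2.1
  have hy1 : D.y i1 i0 ≠ 0 := (mul_ne_zero_iff.mp (hconn i1 m1).2.2).2
  have hy2 : D.y i2 i0 ≠ 0 := (mul_ne_zero_iff.mp (hconn i2 m2).2.2).2
  have hy02 : D.y i0 i2 ≠ 0 := (mul_ne_zero_iff.mp (hconn i2 m2).2.2).1
  -- cross relation: the two "center" vectors are proportional
  have hcross : (b2 * D.y i1 i0 - b1 * D.y i2 i0) * P3 = 0 := by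
    linear_combination b2 * E13 - b1 * E23
  have hprop : b2 * D.y i1 i0 = b1 * D.y i2 i0 := by
    rcases mul_eq_zero.mp hcross with h | h
    · exact sub_eq_zero.mp h
    · exact absurd h hP3
  have final : 2 * (D.y i1 i0 * D.y i0 i2) = 0 := by
    linear_combination -(D.y i1 i0) * E22 + D.y i2 i0 * E12 + Q2 * hprop
  exact (mul_ne_zero two_ne_zero (mul_ne_zero hy1 hy02)) final
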